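/- There exist two distinct partial recursive codes c₁ ≠ c₂ that each satisfy the IsMeBot specification (for each i and every n : ℕ, cᵢ.eval n = Part.some (if n = Encodable.encode cᵢ then 1 else 0)); consequently c₁.eval (Encodable.encode c₂) = Part.some 0 and c₂.eval (Encodable.encode c₁) = Part.some 0, so two different implementations of IsMeBot mutually defect, each receiving payoff 1 instead of the mutual-cooperation payoff 2. -/

import Mathlib

/-!
Kleene's recursion theorem yields a code that outputs `1` exactly on its own Gödel number and `0`
elsewhere. Given one such code `c₀`, applying the recursion theorem to "output `1` on my own
number unless I am `c₀`" gives a second one: were the fixed point `c₀` itself, it would answer `0`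
on its own number. Two distinct such codes answer `0` to each other's numbers.
-/

open Encodable

namespace Nat.Partrec.Code

def IsMeBot (c : Code) : Prop :=
  ∀ n : ℕ, c.eval n = Part.some (if n = encode c then 1 else 0)

theorem exists_eval_eq_some_of_computable₂ {f : Code → ℕ → ℕ} (hf : Computable₂ f) :
    ∃ c : Code, ∀ n, c.eval n = Part.some (f c n) := by
  obtain ⟨c, hc⟩ := fixed_point₂ hf.partrec₂
  exact ⟨c, fun n => congrFun hc n⟩

theorem exists_isMeBot : ∃ c : Code, IsMeBot c :=
  exists_eval_eq_some_of_computable₂ <| Primrec₂.to_comp <|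
    _root_.Primrec.ite (Primrec.eq.comp .snd (Primrec.encode.comp .fst)) (.const 1) (.const 0)

namespace IsMeBot

variable {c d : Code}

theorem eval_encode_self (hc : IsMeBot c) : c.eval (encode c) = Part.some 1 := by
  rw [hc, if_pos rfl]

theorem eval_encode_of_ne (hc : IsMeBot c) (hne : c ≠ d) : c.eval (encode d) = Part.some 0 := by
  rw [hc, if_neg fun h => hne (encode_injective h).symm]

theorem exists_ne (hc : IsMeBot c) : ∃ d : Code, IsMeBot d ∧ d ≠ c := by
  have hf : Computable₂ fun (d : Code) (n : ℕ) =>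
      if n = encode d ∧ encode d ≠ encode c then 1 else 0 :=
    Primrec₂.to_comp <| _root_.Primrec.ite
      ((Primrec.eq.comp .snd (Primrec.encode.comp .fst)).and
        (Primrec.eq.comp (Primrec.encode.comp .fst) (.const (encode c))).not)
      (.const 1) (.const 0)
  obtain ⟨d, hd⟩ := exists_eval_eq_some_of_computable₂ hf
  have hdc : d ≠ c := by
    rintro rfl
    have := (hd (encode d)).symm.trans hc.eval_encode_self
    simp at this
  exact ⟨d, fun n => by simp [hd, encode_injective.ne hdc], hdc⟩

end IsMeBot

end Nat.Partrec.Code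

open Nat.Partrec.Code in
/-- There exist two distinct implementations of IsMeBot; being distinct, they
mutually defect against each other, each receiving payoff 1 instead of the
mutual-cooperation payoff 2. -/
theorem two_isMeBots_mutually_defect :
    ∃ c₁ c₂ : Nat.Partrec.Code, c₁ ≠ c₂ ∧
      (∀ n : ℕ, c₁.eval n = Part.some (if n = Encodable.encode c₁ then 1 else 0)) ∧
      (∀ n : ℕ, c₂.eval n = Part.some (if n = Encodable.encode c₂ then 1 else 0)) ∧
      c₁.eval (Encodable.encode c₂) = Part.some 0 ∧
      c₂.eval (Encodable.encode c₁) = Part.some 0 := by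
  obtain ⟨c₁, h₁⟩ := exists_isMeBot
  obtain ⟨c₂, h₂, hne⟩ := h₁.exists_ne
  exact ⟨c₁, c₂, hne.symm, h₁, h₂, h₁.eval_encode_of_ne hne.symm, h₂.eval_encode_of_ne hne⟩
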